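/- arXiv:2501.11364 — 2 statements merged into one kernel-verified Lean document; each statement's English description precedes it below -/
import Mathlib

section
/- With notation as in the definition of sub-resonant transformations: if q ∈ 𝒬_{n+1}, p ∈ 𝒫_{n+1} with q ≤ p componentwise, and for each j ≤ n one chooses natural numbers i^{(j)}_1,...,i^{(j)}_{N_j+1} summing to qⱼ and elements s^{(j)}_k ∈ 𝒬ⱼ with s^{(j)}_k ≤ p̲^{(j)}_k for some p̲^{(j)}_k ∈ 𝒫ⱼ, then the tuple p̃ := p − ∑ⱼ (∑_{k≤N_j} i^{(j)}_k) eⱼ + ∑ⱼ ∑_{k≤N_j} i^{(j)}_k p̲^{(j)}_k satisfies β^{p̃} = β_{n+1}, and p̃ ≥ ∑_{j=1}^{n} ( ∑_{k=1}^{N_j} i^{(j)}_k s^{(j)}_k + i^{(j)}_{N_j+1} eⱼ ) componentwise. -/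
open Finset

noncomputable section

/-- `bpow β p = ∏ᵢ βᵢ ^ pᵢ`. -/
def bpow {n : ℕ} (β : Fin n → ℂ) (p : Fin n → ℕ) : ℂ := ∏ i, β i ^ p i

/-- `𝒫ⱼ`: the set of resonances of `βⱼ`, i.e. `p ∈ ℕⁿ` with `βⱼ = β^p` and
`p ≠ eₖ` for all `k ≥ j`. -/
def resSet {n : ℕ} (β : Fin n → ℂ) (j : Fin n) : Set (Fin n → ℕ) :=
  {p | β j = bpow β p ∧ ∀ k : Fin n, j ≤ k → p ≠ fun i => if i = k then 1 else 0}

/-- `𝒬ⱼ`: the set of nonzero multi-indices componentwise bounded by some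
resonance of `βⱼ`. -/
def subResSet {n : ℕ} (β : Fin n → ℂ) (j : Fin n) : Set (Fin n → ℕ) :=
  {q | q ≠ 0 ∧ ∃ p ∈ resSet β j, ∀ l, q l ≤ p l}

/-- A map `P : ℂⁿ → ℂⁿ` is β sub-resonant if
`P(z) = (a₁z₁, a₂z₂ + P₂(z₁), ..., aₙzₙ + Pₙ(z₁,...,z_{n-1}))` with all `aⱼ ≠ 0`
and each `Pⱼ` a linear combination of monomials `z^q` with `q ∈ 𝒬ⱼ` depending
only on the variables `z₁, ..., z_{j-1}`. -/
def IsSubResonant {n : ℕ} (β : Fin n → ℂ) (P : (Fin n → ℂ) → (Fin n → ℂ)) : Prop :=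
  ∃ (a : Fin n → ℂ) (c : Fin n → ((Fin n → ℕ) →₀ ℂ)),
    (∀ j, a j ≠ 0) ∧
    (∀ j q, c j q ≠ 0 → q ∈ subResSet β j ∧ ∀ i, j ≤ i → q i = 0) ∧
    ∀ (z : Fin n → ℂ) (j : Fin n),
      P z j = a j * z j + (c j).sum fun q coef => coef * ∏ i, z i ^ q i

/-! Substituting the resonances `p̲^{(j)}_k` for `z_j` preserves the weight `β^·`, since
`β^{p̲^{(j)}_k} = β_j`. Hence `β^{p̃} = β^{p - a} β^a = β^p = β_{n+1}` with
`a = ∑ⱼ (∑_{k ≤ N_j} i^{(j)}_k) eⱼ`, where the truncated subtraction is harmless because `a ≤ p`.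
The bound follows from `s^{(j)}_k ≤ p̲^{(j)}_k` and `a + ∑ⱼ i^{(j)}_{N_j+1} eⱼ = ∑_{j ≤ n} qⱼ eⱼ ≤ q ≤ p`. -/

section bpow

variable {n : ℕ} (β : Fin n → ℂ)

theorem bpow_add (p q : Fin n → ℕ) : bpow β (fun i => p i + q i) = bpow β p * bpow β q := by
  simp only [bpow, pow_add, prod_mul_distrib]

theorem bpow_const_mul (c : ℕ) (p : Fin n → ℕ) : bpow β (fun i => c * p i) = bpow β p ^ c := by
  simp only [bpow, ← prod_pow, ← pow_mul, mul_comm]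

theorem bpow_sum {κ : Type*} (s : Finset κ) (f : κ → Fin n → ℕ) :
    bpow β (fun i => ∑ k ∈ s, f k i) = ∏ k ∈ s, bpow β (f k) := by
  simp only [bpow, ← prod_pow_eq_pow_sum]
  exact prod_comm

theorem bpow_indicator (j : Fin n) : bpow β (fun i => if i = j then 1 else 0) = β j := by
  simp [bpow, pow_ite]

end bpow

theorem sum_mul_ite_le_of_le {κ ι : Type*} [Fintype κ] [DecidableEq ι] {e : κ → ι}
    (he : Function.Injective e) {f : κ → ℕ} {g : ι → ℕ} (h : ∀ j, f j ≤ g (e j)) (l : ι) :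
    ∑ j, f j * (if l = e j then 1 else 0) ≤ g l := by
  by_cases hl : ∃ j, e j = l
  · obtain ⟨j, rfl⟩ := hl
    rw [sum_eq_single j (fun k _ hk => by simp [he.ne hk.symm]) (by simp)]
    simpa using h j
  · simp only [not_exists] at hl
    simp [fun j => Ne.symm (hl j)]

theorem subresonant_composition_key_lemma_general {n : ℕ} (β : Fin (n + 1) → ℂ)
    (q p : Fin (n + 1) → ℕ)
    (hp : p ∈ resSet β (Fin.last n))
    (hqp : ∀ l, q l ≤ p l)
    (N : Fin n → ℕ)
    (I : (j : Fin n) → Fin (N j + 1) → ℕ)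
    (hI : ∀ j : Fin n, ∑ k, I j k = q j.castSucc)
    (s pbar : (j : Fin n) → Fin (N j) → (Fin (n + 1) → ℕ))
    (hpbar : ∀ (j : Fin n) (k : Fin (N j)), pbar j k ∈ resSet β j.castSucc)
    (hsp : ∀ (j : Fin n) (k : Fin (N j)) (l : Fin (n + 1)), s j k l ≤ pbar j k l) :
    (bpow β (fun l =>
        (p l - ∑ j : Fin n, (∑ k : Fin (N j), I j k.castSucc) *
            (if l = j.castSucc then 1 else 0)) +
          ∑ j : Fin n, ∑ k : Fin (N j), I j k.castSucc * pbar j k l)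
        = β (Fin.last n)) ∧
    ∀ l : Fin (n + 1),
      (∑ j : Fin n, ((∑ k : Fin (N j), I j k.castSucc * s j k l) +
          I j (Fin.last (N j)) * (if l = j.castSucc then 1 else 0))) ≤
        (p l - ∑ j : Fin n, (∑ k : Fin (N j), I j k.castSucc) *
            (if l = j.castSucc then 1 else 0)) +
          ∑ j : Fin n, ∑ k : Fin (N j), I j k.castSucc * pbar j k l := by
  have hE : ∀ l, (∑ j : Fin n, (∑ k : Fin (N j), I j k.castSucc) *
      (if l = j.castSucc then 1 else 0)) +
        ∑ j : Fin n, I j (Fin.last (N j)) * (if l = j.castSucc then 1 else 0) ≤ p l := by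
    intro l
    simp only [← sum_add_distrib, ← add_mul, ← Fin.sum_univ_castSucc, hI]
    exact sum_mul_ite_le_of_le (Fin.castSucc_injective n) (fun j => hqp _) l
  have hres : ∀ j k, bpow β (pbar j k) = β j.castSucc := fun j k => (hpbar j k).1.symm
  have hsubst : bpow β (fun l => ∑ j : Fin n, ∑ k : Fin (N j), I j k.castSucc * pbar j k l) =
      bpow β (fun l => ∑ j : Fin n, (∑ k : Fin (N j), I j k.castSucc) *
        (if l = j.castSucc then 1 else 0)) := by
    simp only [bpow_sum, bpow_const_mul, bpow_indicator, hres, prod_pow_eq_pow_sum]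
  refine ⟨?_, fun l => ?_⟩
  · rw [bpow_add, hsubst, ← bpow_add, hp.1]
    congr 1
    funext l
    have := hE l
    omega
  · rw [sum_add_distrib, add_comm (p l - _)]
    refine add_le_add (sum_le_sum fun j _ => sum_le_sum fun k _ => ?_) ?_
    · exact Nat.mul_le_mul_left _ (hsp j k l)
    · have := hE l
      omega

/-- the key combinatorial lemma showing composition of
sub-resonant maps remains sub-resonant. Given `q ∈ 𝒬_{n+1}`, `p ∈ 𝒫_{n+1}` with
`q ≤ p`, and for each `j ≤ n` naturals `i^{(j)}_1, ..., i^{(j)}_{N_j+1}` summing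
to `qⱼ`, together with `s^{(j)}_k ∈ 𝒬ⱼ` bounded by `p̲^{(j)}_k ∈ 𝒫ⱼ`, the tuple
`p̃ = p − ∑ⱼ(∑_{k ≤ N_j} i^{(j)}_k)eⱼ + ∑ⱼ∑_{k ≤ N_j} i^{(j)}_k p̲^{(j)}_k`
satisfies `β^p̃ = β_{n+1}` and bounds
`∑ⱼ(∑_{k ≤ N_j} i^{(j)}_k s^{(j)}_k + i^{(j)}_{N_j+1} eⱼ)` componentwise. -/
theorem subresonant_composition_key_lemma {n : ℕ} (β : Fin (n + 1) → ℂ)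
    (h1 : ∀ i, ‖β i‖ < 1)
    (hpos : ∀ i, 0 < ‖β i‖)
    (hmono : ∀ i j : Fin (n + 1), i ≤ j → ‖β j‖ ≤ ‖β i‖)
    (q p : Fin (n + 1) → ℕ)
    (hq : q ∈ subResSet β (Fin.last n))
    (hp : p ∈ resSet β (Fin.last n))
    (hqp : ∀ l, q l ≤ p l)
    (N : Fin n → ℕ)
    (I : (j : Fin n) → Fin (N j + 1) → ℕ)
    (hI : ∀ j : Fin n, ∑ k, I j k = q j.castSucc)
    (s pbar : (j : Fin n) → Fin (N j) → (Fin (n + 1) → ℕ))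
    (hs : ∀ (j : Fin n) (k : Fin (N j)), s j k ∈ subResSet β j.castSucc)
    (hpbar : ∀ (j : Fin n) (k : Fin (N j)), pbar j k ∈ resSet β j.castSucc)
    (hsp : ∀ (j : Fin n) (k : Fin (N j)) (l : Fin (n + 1)), s j k l ≤ pbar j k l) :
    (bpow β (fun l =>
        (p l - ∑ j : Fin n, (∑ k : Fin (N j), I j k.castSucc) *
            (if l = j.castSucc then 1 else 0)) +
          ∑ j : Fin n, ∑ k : Fin (N j), I j k.castSucc * pbar j k l)
        = β (Fin.last n)) ∧
    ∀ l : Fin (n + 1),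
      (∑ j : Fin n, ((∑ k : Fin (N j), I j k.castSucc * s j k l) +
          I j (Fin.last (N j)) * (if l = j.castSucc then 1 else 0))) ≤
        (p l - ∑ j : Fin n, (∑ k : Fin (N j), I j k.castSucc) *
            (if l = j.castSucc then 1 else 0)) +
          ∑ j : Fin n, ∑ k : Fin (N j), I j k.castSucc * pbar j k l :=
  subresonant_composition_key_lemma_general β q p hp hqp N I hI s pbar hpbar hsp
end
end

section
/- Let G̃ be the subgroup of Aut(ℂⁿ) generated by G^r_β and all translations. Then the map ρ : ℂⁿ × G^r_β → G̃, (z,P) ↦ θ_z ∘ P, is a bijection, and under this bijection the group law reads (z,P)·(w,Q) = (z + P(w), θ_{−P(w)} ∘ P ∘ θ_w ∘ Q). -/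
open Finset

noncomputable section

/-! Write a sub-resonant map as `P z = a z + F z`, where `F j` is a polynomial in
`z₁, …, z_{j-1}` whose monomials `z^q` lie under a resonance `p` of `β j`. Give a monomial `z^m`
the weight `β^p` of any `p ≥ m` that is not a coordinate vector `e_k`, `k ≥ j`: weights multiply
under products. Substituting a sub-resonant map, or a translate `z + w`, into a monomial `z^q` of
`F j` therefore produces monomials of weight `β^q`, and multiplying with `β^(p - q)` puts them
back under a resonance of `β j`. So sub-resonant maps are closed under composition and under
`P ↦ θ_{-P w} ∘ P ∘ θ_w`, and by triangularity the inverse is reached by finitely many such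
substitutions. Hence the maps `θ_z ∘ P` form a group, which contains the generators of `G̃` and
so equals it; the decomposition is unique because `P 0 = 0` forces `z = g 0`. -/

namespace SubResonant

variable {n : ℕ}

section Polynomials

def monomialFun (q : Fin n → ℕ) (z : Fin n → ℂ) : ℂ := ∏ i, z i ^ q i

lemma monomialFun_zero : monomialFun (0 : Fin n → ℕ) = 1 := by
  funext z; simp [monomialFun]

lemma monomialFun_add (q q' : Fin n → ℕ) :
    monomialFun (q + q') = monomialFun q * monomialFun q' := by
  funext z; simp only [monomialFun, Pi.add_apply, Pi.mul_apply, pow_add, prod_mul_distrib]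

lemma monomialFun_single (i : Fin n) : monomialFun (Pi.single i 1) = fun z => z i := by
  funext z; rw [monomialFun, prod_eq_single i] <;> simp +contextual

lemma monomialFun_apply_zero {q : Fin n → ℕ} (hq : q ≠ 0) : monomialFun q 0 = 0 := by
  obtain ⟨i, hi⟩ := Function.ne_iff.mp hq
  exact prod_eq_zero (mem_univ i) (zero_pow hi)

def polySpan (S : Set (Fin n → ℕ)) : Submodule ℂ ((Fin n → ℂ) → ℂ) :=
  Submodule.span ℂ (monomialFun '' S)

variable {S T U : Set (Fin n → ℕ)} {f g : (Fin n → ℂ) → ℂ}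

lemma mem_polySpan_iff : f ∈ polySpan S ↔ ∃ c : (Fin n → ℕ) →₀ ℂ,
    (∀ q, c q ≠ 0 → q ∈ S) ∧ ∀ z, f z = c.sum fun q coef => coef * ∏ i, z i ^ q i := by
  rw [polySpan, Finsupp.mem_span_image_iff_linearCombination]
  refine exists_congr fun c => and_congr ?_ ?_
  · rw [Finsupp.mem_supported']
    exact forall_congr' fun q => not_imp_comm
  · rw [Finsupp.linearCombination_apply, eq_comm, funext_iff]
    simp [Finsupp.sum, Finset.sum_apply, monomialFun]

lemma monomialFun_mem_polySpan {q : Fin n → ℕ} (hq : q ∈ S) : monomialFun q ∈ polySpan S :=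
  Submodule.subset_span ⟨q, hq, rfl⟩

lemma polySpan_mono (h : S ⊆ T) : polySpan S ≤ polySpan T :=
  Submodule.span_mono (Set.image_mono h)

lemma mul_mem_polySpan (hST : ∀ s ∈ S, ∀ t ∈ T, s + t ∈ U) (hf : f ∈ polySpan S)
    (hg : g ∈ polySpan T) : f * g ∈ polySpan U := by
  have hle : polySpan S * polySpan T ≤ polySpan U := by
    rw [polySpan, polySpan, Submodule.span_mul_span]
    refine Submodule.span_mono ?_
    rintro _ ⟨_, ⟨s, hs, rfl⟩, _, ⟨t, ht, rfl⟩, rfl⟩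
    exact ⟨s + t, hST s hs t ht, monomialFun_add s t⟩
  exact hle (Submodule.mul_mem_mul hf hg)

lemma apply_zero_eq_zero_of_mem_polySpan (hS : 0 ∉ S) (hf : f ∈ polySpan S) : f 0 = 0 := by
  induction hf using Submodule.span_induction with
  | mem _ h =>
    obtain ⟨q, hq, rfl⟩ := h
    exact monomialFun_apply_zero (ne_of_mem_of_not_mem hq hS)
  | zero => rfl
  | add _ _ _ _ hf hg => simp [hf, hg]
  | smul _ _ _ hf => simp [hf]

lemma sub_apply_zero_mem_polySpan (hf : f ∈ polySpan S) :
    (fun z => f z - f 0) ∈ polySpan (S \ {0}) := by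
  induction hf using Submodule.span_induction with
  | mem _ h =>
    obtain ⟨q, hq, rfl⟩ := h
    rcases eq_or_ne q 0 with rfl | hq0
    · convert (polySpan (S \ {0})).zero_mem; simp [monomialFun_zero]
    · simpa [monomialFun_apply_zero hq0] using monomialFun_mem_polySpan (S := S \ {0}) ⟨hq, hq0⟩
  | zero => convert (polySpan (S \ {0})).zero_mem; simp
  | add f g _ _ hf hg =>
    convert Submodule.add_mem _ hf hg using 1; funext z; simp only [Pi.add_apply]; ring
  | smul a f _ hf =>
    convert Submodule.smul_mem _ a hf using 1
    funext z; simp only [Pi.smul_apply, smul_eq_mul]; ring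

lemma apply_eq_of_mem_polySpan {j : Fin n} (hS : ∀ q ∈ S, ∀ k, j ≤ k → q k = 0)
    (hf : f ∈ polySpan S) {z z' : Fin n → ℂ} (hzz' : ∀ i < j, z i = z' i) : f z = f z' := by
  induction hf using Submodule.span_induction with
  | mem _ h =>
    obtain ⟨q, hq, rfl⟩ := h
    refine prod_congr rfl fun i _ => ?_
    rcases lt_or_ge i j with hij | hji
    · rw [hzz' i hij]
    · simp [hS q hq i hji]
  | zero => rfl
  | add _ _ _ _ hf hg => simp [hf, hg]
  | smul _ _ _ hf => simp [hf]

end Polynomials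

section Exponents

lemma bpow_add (β : Fin n → ℂ) (p q : Fin n → ℕ) : bpow β (p + q) = bpow β p * bpow β q := by
  simp only [bpow, Pi.add_apply, pow_add, prod_mul_distrib]

lemma bpow_single (β : Fin n → ℂ) (i : Fin n) : bpow β (Pi.single i 1) = β i := by
  rw [bpow, prod_eq_single i] <;> simp +contextual

lemma eq_zero_or_eq_zero_of_add_eq_single {p p' : Fin n → ℕ} {k : Fin n}
    (h : p + p' = Pi.single k 1) : p = 0 ∨ p' = 0 := by
  by_contra! hne
  obtain ⟨i, hi⟩ := Function.ne_iff.mp hne.1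
  obtain ⟨i', hi'⟩ := Function.ne_iff.mp hne.2
  have h1 := congrFun h i
  have h2 := congrFun h i'
  simp only [Pi.add_apply, Pi.single_apply, Pi.zero_apply] at h1 h2 hi hi'
  split_ifs at h1 h2 <;> subst_vars <;> omega

def subResSetOfWeight (β : Fin n → ℂ) (j : Fin n) (μ : ℂ) : Set (Fin n → ℕ) :=
  {m | (∀ k, j ≤ k → m k = 0) ∧ ∃ p, m ≤ p ∧ bpow β p = μ ∧ ∀ k, j ≤ k → p ≠ Pi.single k 1}

variable {β : Fin n → ℂ} {j : Fin n}

lemma zero_mem_subResSetOfWeight : 0 ∈ subResSetOfWeight β j 1 := by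
  refine ⟨fun _ _ => rfl, 0, le_rfl, by simp [bpow], fun k _ h => ?_⟩
  simpa using congrFun h k

lemma add_mem_subResSetOfWeight {μ ν : ℂ} {m m' : Fin n → ℕ}
    (hm : m ∈ subResSetOfWeight β j μ) (hm' : m' ∈ subResSetOfWeight β j ν) :
    m + m' ∈ subResSetOfWeight β j (μ * ν) := by
  obtain ⟨hmj, p, hmp, hpμ, hp⟩ := hm
  obtain ⟨hm'j, p', hm'p', hp'ν, hp'⟩ := hm'
  refine ⟨fun k hk => by simp [hmj k hk, hm'j k hk], p + p', add_le_add hmp hm'p',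
    by rw [bpow_add, hpμ, hp'ν], fun k hk h => ?_⟩
  rcases eq_zero_or_eq_zero_of_add_eq_single h with rfl | rfl
  · exact hp' k hk (by simpa using h)
  · exact hp k hk (by simpa using h)

lemma mem_subResSetOfWeight_mul_bpow {μ : ℂ} {m : Fin n → ℕ}
    (hm : m ∈ subResSetOfWeight β j μ) (hm0 : m ≠ 0) (s : Fin n → ℕ) :
    m ∈ subResSetOfWeight β j (μ * bpow β s) := by
  obtain ⟨hmj, p, hmp, hpμ, hp⟩ := hm
  have hp0 : p ≠ 0 := fun h => hm0 (le_antisymm (h ▸ hmp) (zero_le))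
  refine ⟨hmj, p + s, le_add_right hmp, by rw [bpow_add, hpμ], fun k hk h => ?_⟩
  rcases eq_zero_or_eq_zero_of_add_eq_single h with h0 | rfl
  · exact hp0 h0
  · exact hp k hk (by simpa using h)

lemma subResSetOfWeight_mono {i : Fin n} (hij : i ≤ j) (μ : ℂ) :
    subResSetOfWeight β i μ ⊆ subResSetOfWeight β j μ :=
  fun _ ⟨hmi, p, hmp, hpμ, hp⟩ =>
    ⟨fun k hk => hmi k (hij.trans hk), p, hmp, hpμ, fun k hk => hp k (hij.trans hk)⟩

lemma mem_subResSetOfWeight_of_le {μ : ℂ} {m m' : Fin n → ℕ} (hm : m ∈ subResSetOfWeight β j μ)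
    (hle : m' ≤ m) : m' ∈ subResSetOfWeight β j μ :=
  let ⟨hmj, p, hmp, hpμ, hp⟩ := hm
  ⟨fun k hk => Nat.eq_zero_of_le_zero (hmj k hk ▸ hle k), p, hle.trans hmp, hpμ, hp⟩

lemma single_mem_subResSetOfWeight {i : Fin n} (hij : i < j) :
    Pi.single i 1 ∈ subResSetOfWeight β j (β i) := by
  refine ⟨fun k hk => ?_, Pi.single i 1, le_rfl, bpow_single β i, fun k hk h => ?_⟩
  · simp [(hij.trans_le hk).ne']
  · simpa [Pi.single_apply, (hij.trans_le hk).ne] using congrFun h i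

lemma subResSetOfWeight_self_sdiff_zero (β : Fin n → ℂ) (j : Fin n) :
    subResSetOfWeight β j (β j) \ {0} = {q | q ∈ subResSet β j ∧ ∀ i, j ≤ i → q i = 0} := by
  have hsingle (k : Fin n) : (fun i => if i = k then 1 else 0) = (Pi.single k 1 : Fin n → ℕ) := by
    funext i; simp [Pi.single_apply]
  ext q
  simp only [subResSetOfWeight, subResSet, resSet, hsingle, Set.mem_sdiff, Set.mem_ofPred_eq,
    Set.mem_singleton_iff, Pi.le_def]
  constructor
  · rintro ⟨⟨hqj, p, hqp, hpμ, hp⟩, hq0⟩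
    exact ⟨⟨hq0, p, ⟨hpμ.symm, hp⟩, hqp⟩, hqj⟩
  · rintro ⟨⟨hq0, p, ⟨hpμ, hp⟩, hqp⟩, hqj⟩
    exact ⟨⟨hqj, p, hqp, hpμ.symm, hp⟩, hq0⟩

end Exponents

variable {β : Fin n → ℂ} {j : Fin n} {f g : (Fin n → ℂ) → ℂ}

lemma one_mem_polySpan_subResSetOfWeight :
    (1 : (Fin n → ℂ) → ℂ) ∈ polySpan (subResSetOfWeight β j 1) :=
  monomialFun_zero (n := n) ▸ monomialFun_mem_polySpan zero_mem_subResSetOfWeight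

lemma mul_mem_polySpan_subResSetOfWeight {μ ν : ℂ} (hf : f ∈ polySpan (subResSetOfWeight β j μ))
    (hg : g ∈ polySpan (subResSetOfWeight β j ν)) :
    f * g ∈ polySpan (subResSetOfWeight β j (μ * ν)) :=
  mul_mem_polySpan (fun _ hs _ ht => add_mem_subResSetOfWeight hs ht) hf hg

lemma pow_mem_polySpan_subResSetOfWeight {μ : ℂ} (hf : f ∈ polySpan (subResSetOfWeight β j μ))
    (k : ℕ) : f ^ k ∈ polySpan (subResSetOfWeight β j (μ ^ k)) := by
  induction k with
  | zero => simpa using one_mem_polySpan_subResSetOfWeight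
  | succ k ih => simpa only [pow_succ] using mul_mem_polySpan_subResSetOfWeight ih hf

lemma prod_pow_mem_polySpan_subResSetOfWeight (R : Fin n → (Fin n → ℂ) → ℂ) (q : Fin n → ℕ)
    (hR : ∀ i, q i ≠ 0 → R i ∈ polySpan (subResSetOfWeight β j (β i))) :
    ∏ i, R i ^ q i ∈ polySpan (subResSetOfWeight β j (bpow β q)) := by
  have hpow (i : Fin n) : R i ^ q i ∈ polySpan (subResSetOfWeight β j (β i ^ q i)) := by
    rcases eq_or_ne (q i) 0 with hi | hi
    · simpa [hi] using one_mem_polySpan_subResSetOfWeight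
    · exact pow_mem_polySpan_subResSetOfWeight (hR i hi) _
  have := prod_induction (s := univ) (fun i => (R i ^ q i, β i ^ q i))
    (fun x => x.1 ∈ polySpan (subResSetOfWeight β j x.2))
    (fun _ _ => mul_mem_polySpan_subResSetOfWeight) one_mem_polySpan_subResSetOfWeight
    (fun i _ => hpow i)
  simpa only [bpow, Prod.fst_prod, Prod.snd_prod] using this

lemma comp_sub_apply_zero_mem_polySpan {R : (Fin n → ℂ) → (Fin n → ℂ)}
    (hR : ∀ i < j, (fun z => R z i) ∈ polySpan (subResSetOfWeight β j (β i)))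
    (hf : f ∈ polySpan (subResSetOfWeight β j (β j) \ {0})) :
    (fun z => f (R z) - f (R 0)) ∈ polySpan (subResSetOfWeight β j (β j) \ {0}) := by
  induction hf using Submodule.span_induction with
  | mem _ h =>
    obtain ⟨q, ⟨hq, hq0⟩, rfl⟩ := h
    obtain ⟨hqj, p, hqp, hpj, -⟩ := hq
    have hcomp :
        (fun z => monomialFun q (R z)) ∈ polySpan (subResSetOfWeight β j (bpow β q)) := by
      convert prod_pow_mem_polySpan_subResSetOfWeight (fun i z => R z i) q
        (fun i hi => hR i (lt_of_not_ge fun hji => hi (hqj i hji))) using 1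
      funext z; simp [monomialFun, prod_apply]
    have hweight : subResSetOfWeight β j (bpow β q) \ {0} ⊆ subResSetOfWeight β j (β j) \ {0} :=
      fun m ⟨hm, hm0⟩ => ⟨by
        simpa only [← bpow_add, add_tsub_cancel_of_le hqp, hpj]
          using mem_subResSetOfWeight_mul_bpow hm hm0 (p - q), hm0⟩
    exact polySpan_mono hweight (sub_apply_zero_mem_polySpan hcomp)
  | zero => convert Submodule.zero_mem _; simp
  | add f g _ _ hf hg =>
    convert Submodule.add_mem _ hf hg using 1; funext z; simp only [Pi.add_apply]; ring
  | smul a f _ hf =>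
    convert Submodule.smul_mem _ a hf using 1
    funext z; simp only [Pi.smul_apply, smul_eq_mul]; ring

end SubResonant

open SubResonant

section

variable {n : ℕ} {β : Fin n → ℂ} {P : (Fin n → ℂ) → (Fin n → ℂ)}

lemma isSubResonant_iff : IsSubResonant β P ↔ ∃ a : Fin n → ℂ, (∀ j, a j ≠ 0) ∧
    ∀ j, (fun z => P z j - a j * z j) ∈ polySpan (subResSetOfWeight β j (β j) \ {0}) := by
  simp only [subResSetOfWeight_self_sdiff_zero, mem_polySpan_iff]
  constructor
  · rintro ⟨a, c, ha, hc, hP⟩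
    exact ⟨a, ha, fun j => ⟨c j, hc j, fun z => by rw [hP z j]; ring⟩⟩
  · rintro ⟨a, ha, h⟩
    choose c hc hP using h
    exact ⟨a, c, ha, hc, fun z j => by rw [← hP j z]; ring⟩

lemma isSubResonant_id : IsSubResonant β fun z => z :=
  isSubResonant_iff.2 ⟨1, fun _ => one_ne_zero, fun _ => by convert Submodule.zero_mem _; simp⟩

end

namespace IsSubResonant

variable {n : ℕ} {β : Fin n → ℂ} {P Q : (Fin n → ℂ) → (Fin n → ℂ)}

lemma map_zero (hP : IsSubResonant β P) : P 0 = 0 := by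
  obtain ⟨a, -, hf⟩ := isSubResonant_iff.1 hP
  funext j
  simpa using apply_zero_eq_zero_of_mem_polySpan (by simp) (hf j)

lemma apply_mem_polySpan (hQ : IsSubResonant β Q) {i j : Fin n} (hij : i < j) :
    (fun z => Q z i) ∈ polySpan (subResSetOfWeight β j (β i)) := by
  obtain ⟨b, -, hg⟩ := isSubResonant_iff.1 hQ
  have hlin := Submodule.smul_mem _ (b i)
    (monomialFun_mem_polySpan (single_mem_subResSetOfWeight (β := β) hij))
  have hnonlin := polySpan_mono (Set.sdiff_subset.trans (subResSetOfWeight_mono hij.le _)) (hg i)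
  convert Submodule.add_mem _ hlin hnonlin using 1
  funext z; simp [monomialFun_single]

lemma comp_mem_polySpan (hQ : IsSubResonant β Q) {j : Fin n} {f : (Fin n → ℂ) → ℂ}
    (hf : f ∈ polySpan (subResSetOfWeight β j (β j) \ {0})) :
    (fun z => f (Q z)) ∈ polySpan (subResSetOfWeight β j (β j) \ {0}) := by
  have := comp_sub_apply_zero_mem_polySpan (fun i hij => hQ.apply_mem_polySpan hij) hf
  simpa only [hQ.map_zero, apply_zero_eq_zero_of_mem_polySpan (by simp) hf,
    sub_zero] using this

lemma comp (hP : IsSubResonant β P) (hQ : IsSubResonant β Q) :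
    IsSubResonant β fun z => P (Q z) := by
  obtain ⟨a, ha, hf⟩ := isSubResonant_iff.1 hP
  obtain ⟨b, hb, hg⟩ := isSubResonant_iff.1 hQ
  refine isSubResonant_iff.2 ⟨a * b, fun j => mul_ne_zero (ha j) (hb j), fun j => ?_⟩
  convert Submodule.add_mem _ (Submodule.smul_mem _ (a j) (hg j)) (hQ.comp_mem_polySpan (hf j))
    using 1
  funext z; simp only [Pi.mul_apply, Pi.add_apply, Pi.smul_apply, smul_eq_mul]; ring

lemma translate (hP : IsSubResonant β P) (w : Fin n → ℂ) :
    IsSubResonant β fun u => P (u + w) - P w := by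
  obtain ⟨a, ha, hf⟩ := isSubResonant_iff.1 hP
  refine isSubResonant_iff.2 ⟨a, ha, fun j => ?_⟩
  have hR (i : Fin n) (hij : i < j) :
      (fun z => (z + w) i) ∈ polySpan (subResSetOfWeight β j (β i)) := by
    have hsingle := single_mem_subResSetOfWeight (β := β) hij
    convert Submodule.add_mem _ (monomialFun_mem_polySpan hsingle) (Submodule.smul_mem _ (w i)
      (monomialFun_mem_polySpan (mem_subResSetOfWeight_of_le hsingle (zero_le)))) using 1
    funext z; simp [monomialFun_single, monomialFun_zero]
  convert comp_sub_apply_zero_mem_polySpan hR (hf j) using 1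
  funext z; simp only [Pi.sub_apply, Pi.add_apply, Pi.zero_apply, zero_add]; ring

/-- The inverse is the fixed point, reached after `n` steps, of
`R ↦ (z ↦ a⁻¹ (z - F (R z)))`, where `P = a z + F`: by triangularity the `j`-th coordinate
is correct once the previous ones are. -/
lemma of_rightInverse (hP : IsSubResonant β P) (hQ : Function.RightInverse Q P) :
    IsSubResonant β Q := by
  obtain ⟨a, ha, hF⟩ := isSubResonant_iff.1 hP
  set step : ((Fin n → ℂ) → (Fin n → ℂ)) → ((Fin n → ℂ) → (Fin n → ℂ)) :=
    fun R z j => (a j)⁻¹ * (z j - (P (R z) j - a j * R z j)) with hstep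
  have hstep_sub (R : (Fin n → ℂ) → (Fin n → ℂ)) (hR : IsSubResonant β R) :
      IsSubResonant β (step R) := by
    refine isSubResonant_iff.2 ⟨fun j => (a j)⁻¹, fun j => inv_ne_zero (ha j), fun j => ?_⟩
    convert Submodule.smul_mem _ (-(a j)⁻¹) (hR.comp_mem_polySpan (hF j)) using 1
    funext z; simp only [hstep, Pi.smul_apply, smul_eq_mul]; ring
  have hstep_apply (R : (Fin n → ℂ) → (Fin n → ℂ)) (z : Fin n → ℂ) (j : Fin n)
      (hR : ∀ i < j, R z i = Q z i) : step R z j = Q z j := by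
    have hFQ := apply_eq_of_mem_polySpan (fun q hq => hq.1.1) (hF j) hR
    have hz : z j = a j * Q z j + (P (Q z) j - a j * Q z j) := by rw [hQ z]; ring
    simp only [hstep]
    rw [hFQ, hz]
    field_simp [ha j]
    ring
  have hcoord (k : ℕ) (j : Fin n) (hjk : (j : ℕ) < k) (z : Fin n → ℂ) :
      step^[k] (fun z => z) z j = Q z j := by
    induction k generalizing j with
    | zero => omega
    | succ k ih =>
      rw [Function.iterate_succ_apply']
      exact hstep_apply _ z j fun i hij => ih i (by have : (i : ℕ) < j := hij; omega)
  have hsub (k : ℕ) : IsSubResonant β (step^[k] fun z => z) := by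
    induction k with
    | zero => exact isSubResonant_id
    | succ k ih => rw [Function.iterate_succ_apply']; exact hstep_sub _ ih
  convert hsub n using 1
  funext z j
  exact (hcoord n j j.isLt z).symm

end IsSubResonant

/-- The maps `θ_z ∘ P`, `P` sub-resonant, recorded through `P = g - g 0`. -/
def subResonantAffineGroup {n : ℕ} (β : Fin n → ℂ) : Subgroup (Equiv.Perm (Fin n → ℂ)) where
  carrier := {g | IsSubResonant β fun v => g v - g 0}
  mul_mem' {g h} hg hh := by
    show IsSubResonant β fun v => g (h v) - g (h 0)
    convert (IsSubResonant.translate hg (h 0)).comp hh using 2 with v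
    simp
  one_mem' := by
    show IsSubResonant β fun v => v - 0
    simpa using isSubResonant_id
  inv_mem' {g} hg := by
    have hinv : IsSubResonant β fun y => g⁻¹ (y + g 0) :=
      IsSubResonant.of_rightInverse hg fun y => by simp
    show IsSubResonant β fun v => g⁻¹ v - g⁻¹ 0
    convert hinv.translate (-g 0) using 2 with v
    simp [sub_eq_add_neg]

lemma closure_subResonant_union_translations {n : ℕ} (β : Fin n → ℂ) :
    Subgroup.closure ({h : Equiv.Perm (Fin n → ℂ) | IsSubResonant β ⇑h} ∪
      {h : Equiv.Perm (Fin n → ℂ) | ∃ w, ∀ v, h v = v + w}) = subResonantAffineGroup β := by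
  refine le_antisymm ((Subgroup.closure_le _).2 ?_) fun g hg => ?_
  · rintro g (hg | ⟨w, hw⟩)
    · show IsSubResonant β fun v => g v - g 0
      simpa [hg.map_zero] using hg
    · show IsSubResonant β fun v => g v - g 0
      simpa [hw] using isSubResonant_id
  · have hdecomp : g = Equiv.addRight (g 0) * g.trans (Equiv.subRight (g 0)) := by
      ext v; simp
    rw [hdecomp]
    exact Subgroup.mul_mem _ (Subgroup.subset_closure (Or.inr ⟨g 0, fun v => rfl⟩))
      (Subgroup.subset_closure (Or.inl hg))

lemma mem_subResonantAffineGroup_iff {n : ℕ} {β : Fin n → ℂ} {g : Equiv.Perm (Fin n → ℂ)} :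
    g ∈ subResonantAffineGroup β ↔
      ∃! x : (Fin n → ℂ) × {P : Equiv.Perm (Fin n → ℂ) // IsSubResonant β ⇑P},
        ∀ v, g v = x.1 + x.2.1 v := by
  constructor
  · intro hg
    refine ⟨(g 0, ⟨g.trans (Equiv.subRight (g 0)), hg⟩), fun v => by simp, ?_⟩
    rintro ⟨z, P, hP⟩ h
    obtain rfl : z = g 0 := by simpa [hP.map_zero] using (h 0).symm
    exact Prod.ext rfl (Subtype.ext (Equiv.ext fun v => by simp [h v]))
  · rintro ⟨⟨z, P, hP⟩, h, -⟩
    show IsSubResonant β fun v => g v - g 0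
    simpa [h, hP.map_zero] using hP

theorem semidirect_product_structure_general {n : ℕ} (β : Fin n → ℂ) :
    (∀ g : Equiv.Perm (Fin n → ℂ),
      g ∈ Subgroup.closure
          ({h : Equiv.Perm (Fin n → ℂ) | IsSubResonant β ⇑h} ∪
           {h : Equiv.Perm (Fin n → ℂ) | ∃ w, ∀ v, h v = v + w}) ↔
      ∃! x : (Fin n → ℂ) × {P : Equiv.Perm (Fin n → ℂ) // IsSubResonant β ⇑P},
        ∀ v, g v = x.1 + x.2.1 v) ∧
    (∀ (z w : Fin n → ℂ) (P Q : Equiv.Perm (Fin n → ℂ)),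
      IsSubResonant β ⇑P → IsSubResonant β ⇑Q →
      (∀ v, z + P (w + Q v) = (z + P w) + (fun u => P (u + w) - P w) (Q v)) ∧
        IsSubResonant β (fun u => P (u + w) - P w)) := by
  refine ⟨fun g => ?_, fun z w P Q hP _ => ⟨fun v => ?_, hP.translate w⟩⟩
  · rw [closure_subResonant_union_translations]
    exact mem_subResonantAffineGroup_iff
  · rw [add_comm w, add_add_sub_cancel]

/-- let `G̃` be the subgroup of `Aut(ℂⁿ)` generated by `G^r_β` and
the translations. Then every element of `G̃` is uniquely of the form
`θ_z ∘ P` with `P ∈ G^r_β` (i.e. `ρ : (z, P) ↦ θ_z ∘ P` is a bijection onto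
`G̃`), and under this identification the group law reads
`(z,P)·(w,Q) = (z + P(w), θ_{−P(w)} ∘ P ∘ θ_w ∘ Q)`. -/
theorem semidirect_product_structure {n : ℕ} (β : Fin n → ℂ)
    (h1 : ∀ i, ‖β i‖ < 1)
    (hpos : ∀ i, 0 < ‖β i‖)
    (hmono : ∀ i j : Fin n, i ≤ j → ‖β j‖ ≤ ‖β i‖) :
    (∀ g : Equiv.Perm (Fin n → ℂ),
      g ∈ Subgroup.closure
          ({h : Equiv.Perm (Fin n → ℂ) | IsSubResonant β ⇑h} ∪
           {h : Equiv.Perm (Fin n → ℂ) | ∃ w, ∀ v, h v = v + w}) ↔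
      ∃! x : (Fin n → ℂ) × {P : Equiv.Perm (Fin n → ℂ) // IsSubResonant β ⇑P},
        ∀ v, g v = x.1 + x.2.1 v) ∧
    (∀ (z w : Fin n → ℂ) (P Q : Equiv.Perm (Fin n → ℂ)),
      IsSubResonant β ⇑P → IsSubResonant β ⇑Q →
      (∀ v, z + P (w + Q v) = (z + P w) + (fun u => P (u + w) - P w) (Q v)) ∧
        IsSubResonant β (fun u => P (u + w) - P w)) :=
  semidirect_product_structure_general β
end
end
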